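/- arXiv:1006.3302 — 3 statements merged into one kernel-verified Lean document; each statement's English description precedes it below -/
import Mathlib

section
/- Consider a Markov chain on the path {0,1,...,d} with loop probabilities α_i ≥ 1/2 at each node and positive upward probabilities. Then the first-passage probability f_{0,d}(t) from node 0 to node d is log-concave in t. -/
/-- Transition matrix of a random walk on the path `0,1,...,d`: loop probability
`α i` at node `i`, upward probability `β i`, downward probability `1 - α i - β i`. -/
def pathP (d : ℕ) (α β : ℕ → ℝ) : Matrix (Fin (d + 1)) (Fin (d + 1)) ℝ :=
  fun i j =>
    if j.val = i.val then α i.val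
    else if j.val = i.val + 1 then β i.val
    else if j.val + 1 = i.val then 1 - α i.val - β i.val
    else 0

/-- The walk killed upon reaching node `d`. -/
def pathQ (d : ℕ) (α β : ℕ → ℝ) : Matrix (Fin (d + 1)) (Fin (d + 1)) ℝ :=
  fun i j => if j = Fin.last d then 0 else pathP d α β i j

/-- First-passage probabilities from node `0` to node `d`. -/
noncomputable def firstPassage (d : ℕ) (α β : ℕ → ℝ) : ℕ → ℝ
  | 0 => 0
  | (t + 1) => ∑ j, (pathQ d α β ^ t) 0 j * pathP d α β j (Fin.last d)

/-!
Killing the walk at `d` gives `f (t + 1) = β m * (T ^ t) 0 m`, where `m = d - 1` and `T` is the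
tridiagonal matrix of the walk on `{0, …, m}`. Moving a little mass from the superdiagonal to the
subdiagonal makes the latter positive without changing the row sums, and log-concavity passes to
the limit. A tridiagonal matrix with `b i * c (i + 1) > 0` is reversible, with weights
`∏ k < i, b k / c (k + 1)`, hence similar to a symmetric matrix; so
`(T ^ t) 0 m = ∑ k, C k * μ k ^ t` with real eigenvalues `μ k`, and Gershgorin's theorem
together with `α i ≥ 1/2` gives `μ k ≥ 0`. Such a sequence satisfies the linear recurrence
with characteristic roots `μ`; as it vanishes for `t < m`, it equals `(T ^ m) 0 m * h (t - m)`,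
where `h n` is the complete homogeneous symmetric polynomial of degree `n` in the `μ k`. Finally
`h` is the convolution of the geometric sequences `(μ k ^ n)`, and convolving with a nonnegative
geometric sequence preserves log-concavity without internal zeros.
-/

open Finset Matrix

/-- Pólya frequency sequences of order two: nonnegative, log-concave, without internal zeros. -/
def IsPF₂ (u : ℕ → ℝ) : Prop :=
  (∀ n, 0 ≤ u n) ∧ ∀ a b, a ≤ b → u a * u (b + 1) ≤ u (a + 1) * u b

theorem IsPF₂.mul_le_mul_shift {u : ℕ → ℝ} (hu : IsPF₂ u) (k : ℕ) :
    ∀ a b, a ≤ b → u a * u (b + k) ≤ u (a + k) * u b := by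
  induction k with
  | zero => intro a b _; simp
  | succ k ih =>
    intro a b hab
    rcases hab.eq_or_lt with rfl | hab
    · rw [mul_comm]
    · calc u a * u (b + (k + 1)) ≤ u (a + 1) * u (b + k) := hu.2 a (b + k) (by omega)
        _ ≤ u (a + 1 + k) * u b := ih (a + 1) b hab
        _ = u (a + (k + 1)) * u b := by rw [add_right_comm, add_assoc]

theorem IsPF₂.mul_le_sq_of_shift {g u : ℕ → ℝ} {n : ℕ} {c : ℝ} (hu : IsPF₂ u)
    (hz : ∀ t < n, g t = 0) (hg : ∀ s, g (n + s) = c * u s) (t : ℕ) :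
    g t * g (t + 2) ≤ g (t + 1) ^ 2 := by
  rcases lt_or_ge t n with ht | ht
  · rw [hz t ht, zero_mul]; positivity
  · obtain ⟨s, rfl⟩ := Nat.exists_eq_add_of_le ht
    rw [hg, add_assoc, hg, add_assoc, hg]
    have := mul_le_mul_of_nonneg_left (hu.2 s (s + 1) s.le_succ) (sq_nonneg c)
    linarith

def geomConv (x : ℝ) (u : ℕ → ℝ) (n : ℕ) : ℝ :=
  ∑ j ∈ range (n + 1), x ^ j * u (n - j)

theorem geomConv_zero (x : ℝ) (u : ℕ → ℝ) : geomConv x u 0 = u 0 := by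
  simp [geomConv]

theorem geomConv_succ (x : ℝ) (u : ℕ → ℝ) (n : ℕ) :
    geomConv x u (n + 1) = x * geomConv x u n + u (n + 1) := by
  rw [geomConv, sum_range_succ', geomConv, mul_sum]
  simp only [pow_succ, Nat.add_sub_add_right, pow_zero, one_mul, Nat.sub_zero]
  exact congrArg (· + _) (sum_congr rfl fun j _ => by ring)

theorem isPF₂_geomConv {x : ℝ} {u : ℕ → ℝ} (hx : 0 ≤ x) (hu : IsPF₂ u) :
    IsPF₂ (geomConv x u) := by
  refine ⟨fun n => sum_nonneg fun j _ => mul_nonneg (pow_nonneg hx j) (hu.1 _),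
    fun a b hab => ?_⟩
  -- the `x`-terms of the recursion `geomConv_succ` cancel
  suffices u (b + 1) * geomConv x u a ≤ u (a + 1) * geomConv x u b by
    rw [geomConv_succ, geomConv_succ]; nlinarith
  calc u (b + 1) * geomConv x u a
      = ∑ j ∈ range (a + 1), x ^ j * (u (a - j) * u (b + 1)) := by
        rw [geomConv, mul_sum]; exact sum_congr rfl fun j _ => by ring
    _ ≤ ∑ j ∈ range (a + 1), x ^ j * (u (a + 1) * u (b - j)) := by
        refine sum_le_sum fun j hj => mul_le_mul_of_nonneg_left ?_ (pow_nonneg hx j)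
        have hj := mem_range.1 hj
        have := hu.mul_le_mul_shift (j + 1) (a - j) (b - j) (by omega)
        rwa [show a - j + (j + 1) = a + 1 by omega, show b - j + (j + 1) = b + 1 by omega] at this
    _ ≤ ∑ j ∈ range (b + 1), x ^ j * (u (a + 1) * u (b - j)) := by
        refine sum_le_sum_of_subset_of_nonneg (range_subset_range.2 (by omega)) fun j _ _ => ?_
        exact mul_nonneg (pow_nonneg hx j) (mul_nonneg (hu.1 _) (hu.1 _))
    _ = u (a + 1) * geomConv x u b := by
        rw [geomConv, mul_sum]; exact sum_congr rfl fun j _ => by ring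

/-- `completeHomogeneous l n` is the complete homogeneous symmetric polynomial of degree `n`
evaluated at the entries of `l`. -/
def completeHomogeneous : List ℝ → ℕ → ℝ
  | [], n => if n = 0 then 1 else 0
  | x :: l, n => geomConv x (completeHomogeneous l) n

theorem completeHomogeneous_zero (l : List ℝ) : completeHomogeneous l 0 = 1 := by
  induction l with
  | nil => rfl
  | cons x l ih => rw [completeHomogeneous, geomConv_zero, ih]

theorem isPF₂_completeHomogeneous (l : List ℝ) (hl : ∀ x ∈ l, 0 ≤ x) :
    IsPF₂ (completeHomogeneous l) := by
  induction l with
  | nil =>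
    refine ⟨fun n => by unfold completeHomogeneous; split_ifs <;> norm_num, fun a b _ => ?_⟩
    simp only [completeHomogeneous, Nat.add_one_ne_zero, if_false, mul_zero]
    split_ifs <;> norm_num
  | cons x l ih =>
    exact isPF₂_geomConv (hl x List.mem_cons_self)
      (ih fun y hy => hl y (List.mem_cons_of_mem x hy))

/-- `g` is annihilated by `∏ x ∈ l, (S - x)`, where `S g = g ∘ Nat.succ` is the shift. -/
def HasCharRoots : List ℝ → (ℕ → ℝ) → Prop
  | [], g => ∀ t, g t = 0
  | x :: l, g => HasCharRoots l fun t => g (t + 1) - x * g t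

theorem hasCharRoots_sum_pow {n : ℕ} (μ C : Fin n → ℝ) :
    HasCharRoots (List.ofFn μ) fun t => ∑ i, C i * μ i ^ t := by
  induction n with
  | zero => simp [HasCharRoots]
  | succ n ih =>
    rw [List.ofFn_succ, HasCharRoots]
    convert ih (fun i => μ i.succ) (fun i => C i.succ * (μ i.succ - μ 0)) using 2 with t
    simp only [Fin.sum_univ_succ, pow_succ]
    rw [mul_add, mul_sum, add_sub_add_comm, ← sum_sub_distrib,
      show C 0 * (μ 0 ^ t * μ 0) - μ 0 * (C 0 * μ 0 ^ t) = 0 by ring, zero_add]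
    exact sum_congr rfl fun i _ => by ring

theorem eq_mul_geomConv {g h : ℕ → ℝ} {x : ℝ} {L : ℕ} (h0 : h 0 = 1)
    (hstep : ∀ t, g (L + t + 1) - x * g (L + t) = g L * h (t + 1)) :
    ∀ t, g (L + t) = g L * geomConv x h t := by
  intro t
  induction t with
  | zero => rw [geomConv_zero, h0, mul_one, add_zero]
  | succ t ih =>
    rw [← add_assoc, geomConv_succ, mul_add, mul_left_comm, ← ih]
    linarith [hstep t]

theorem HasCharRoots.eq_mul_completeHomogeneous (l : List ℝ) :
    ∀ (x : ℝ) (g : ℕ → ℝ), HasCharRoots (x :: l) g → (∀ t < l.length, g t = 0) →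
      ∀ t, g (l.length + t) = g l.length * completeHomogeneous (x :: l) t := by
  induction l with
  | nil =>
    intro x g hg _
    refine eq_mul_geomConv (completeHomogeneous_zero []) fun t => ?_
    simp only [HasCharRoots] at hg
    simp [hg, completeHomogeneous]
  | cons y l ih =>
    intro x g hg hz
    refine eq_mul_geomConv (completeHomogeneous_zero _) fun t => ?_
    have hz' : ∀ t < l.length, g (t + 1) - x * g t = 0 := fun t ht => by
      rw [hz t (by simp only [List.length_cons]; omega),
        hz (t + 1) (by simp only [List.length_cons]; omega), mul_zero, sub_zero]
    have := ih y _ (by rwa [HasCharRoots] at hg) hz' (t + 1)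
    simp only [List.length_cons, hz l.length (by simp), mul_zero, sub_zero] at this ⊢
    rw [← this]
    ring_nf

theorem Matrix.pow_apply_eq_zero_of_add_lt {R : Type*} [Semiring R] {n : ℕ}
    (M : Matrix (Fin n) (Fin n) R) (hM : ∀ i j : Fin n, (i : ℕ) + 1 < j → M i j = 0)
    (t : ℕ) :
    ∀ i j : Fin n, (i : ℕ) + t < j → (M ^ t) i j = 0 := by
  induction t with
  | zero => intro i j hij; simp [one_apply_ne (Fin.ne_of_lt (by omega) : i ≠ j)]
  | succ t ih =>
    intro i j hij
    rw [pow_succ, mul_apply]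
    refine sum_eq_zero fun k _ => ?_
    by_cases hk : (i : ℕ) + t < k
    · rw [ih i k hk, zero_mul]
    · rw [hM k j (by omega), mul_zero]

theorem Matrix.isHermitian_conj_of_reversible {n : Type*} [Fintype n] [DecidableEq n]
    (M : Matrix n n ℝ) (w : n → ℝ) (hw : ∀ i, 0 < w i)
    (hrev : ∀ i j, w i * M i j = w j * M j i) :
    ∃ D : (Matrix n n ℝ)ˣ,
      ((D : Matrix n n ℝ) * M * (↑D⁻¹ : Matrix n n ℝ)).IsHermitian := by
  have hd : ∀ i, √(w i) ≠ 0 := fun i => (Real.sqrt_pos.2 (hw i)).ne'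
  let D : (Matrix n n ℝ)ˣ :=
    ⟨diagonal fun i => √(w i), diagonal fun i => (√(w i))⁻¹,
      by simp [diagonal_mul_diagonal, hd], by simp [diagonal_mul_diagonal, hd]⟩
  refine ⟨D, IsHermitian.ext fun i j => ?_⟩
  simp only [D, Units.inv_mk, Units.val_mk, diagonal_mul, mul_diagonal, star_trivial]
  rw [← div_eq_mul_inv, ← div_eq_mul_inv, div_eq_div_iff (hd i) (hd j)]
  calc √(w j) * M j i * √(w j) = w j * M j i := by
        rw [mul_right_comm, Real.mul_self_sqrt (hw j).le]
    _ = w i * M i j := (hrev i j).symm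
    _ = √(w i) * M i j * √(w i) := by rw [mul_right_comm, Real.mul_self_sqrt (hw i).le]

theorem Matrix.exists_pow_apply_eq_sum_pow {n : Type*} [Fintype n] [DecidableEq n]
    (M : Matrix n n ℝ) (D : (Matrix n n ℝ)ˣ)
    (hS : ((D : Matrix n n ℝ) * M * (↑D⁻¹ : Matrix n n ℝ)).IsHermitian) (i j : n) :
    ∃ C : n → ℝ, ∀ t, (M ^ t) i j = ∑ k, C k * hS.eigenvalues k ^ t := by
  set U : Matrix n n ℝ := (hS.eigenvectorUnitary : Matrix n n ℝ)
  have hSt : ∀ t : ℕ, ((D : Matrix n n ℝ) * M * (↑D⁻¹ : Matrix n n ℝ)) ^ t =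
      U * diagonal (fun k => hS.eigenvalues k ^ t) * star U := by
    intro t
    conv_lhs => rw [hS.spectral_theorem]
    rw [← map_pow, diagonal_pow, Unitary.conjStarAlgAut_apply]
    rfl
  refine ⟨fun k => ((↑D⁻¹ : Matrix n n ℝ) * U) i k * (star U * (D : Matrix n n ℝ)) k j,
    fun t => ?_⟩
  have hM : M = (↑D⁻¹ : Matrix n n ℝ) *
      ((D : Matrix n n ℝ) * M * (↑D⁻¹ : Matrix n n ℝ)) * D := by
    simp [mul_assoc]
  have hMt : M ^ t = (↑D⁻¹ : Matrix n n ℝ) * U * diagonal (fun k => hS.eigenvalues k ^ t) *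
      (star U * (D : Matrix n n ℝ)) := by
    conv_lhs => rw [hM, Units.conj_pow', hSt]
    simp only [Matrix.mul_assoc]
  rw [hMt, mul_apply]
  simp only [mul_diagonal]
  exact sum_congr rfl fun k _ => by ring

theorem Matrix.eigenvalues_mem_spectrum_of_conj {n : Type*} [Fintype n] [DecidableEq n]
    (M : Matrix n n ℝ) (D : (Matrix n n ℝ)ˣ)
    (hS : ((D : Matrix n n ℝ) * M * (↑D⁻¹ : Matrix n n ℝ)).IsHermitian) (k : n) :
    hS.eigenvalues k ∈ spectrum ℝ M :=
  spectrum.units_conjugate (R := ℝ) (a := M) (u := D) ▸ hS.eigenvalues_mem_spectrum_real k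

theorem Matrix.nonneg_of_mem_spectrum_of_diagDominant {n : Type*} [Fintype n] [DecidableEq n]
    {M : Matrix n n ℝ} (hdom : ∀ k, ∑ j ∈ univ.erase k, |M k j| ≤ M k k) {μ : ℝ}
    (hμ : μ ∈ spectrum ℝ M) : 0 ≤ μ := by
  rw [← Matrix.spectrum_toLin', ← Module.End.hasEigenvalue_iff_mem_spectrum] at hμ
  obtain ⟨k, hk⟩ := eigenvalue_mem_ball hμ
  rw [Metric.mem_closedBall, Real.dist_eq] at hk
  simp only [Real.norm_eq_abs] at hk
  linarith [neg_abs_le (μ - M k k), hdom k]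

def tridiag (n : ℕ) (a b c : ℕ → ℝ) : Matrix (Fin n) (Fin n) ℝ :=
  fun i j =>
    if j.val = i.val then a i.val
    else if j.val = i.val + 1 then b i.val
    else if j.val + 1 = i.val then c i.val
    else 0

section Tridiag

variable {n : ℕ} {a b c : ℕ → ℝ}

theorem tridiag_apply_self (i : Fin n) : tridiag n a b c i i = a i := by
  simp [tridiag]

theorem tridiag_apply_eq_zero (i j : Fin n) (h : (i : ℕ) + 1 < j) : tridiag n a b c i j = 0 := by
  simp only [tridiag]
  split_ifs <;> first | rfl | omega

theorem sum_erase_abs_tridiag_le (k : Fin n) :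
    ∑ j ∈ univ.erase k, |tridiag n a b c k j| ≤ |b k| + |c k| := by
  have at_most_one : ∀ (P : Fin n → Prop) [DecidablePred P] (y : ℝ), 0 ≤ y →
      (∀ i j, P i → P j → i = j) → ∑ j, (if P j then y else 0) ≤ y := by
    intro P _ y hy hP
    rw [sum_ite, sum_const_zero, add_zero, sum_const, nsmul_eq_mul]
    refine mul_le_of_le_one_left hy (Nat.cast_le_one.2 (card_le_one.2 fun i hi j hj => ?_))
    exact hP i j (mem_filter.1 hi).2 (mem_filter.1 hj).2
  calc ∑ j ∈ univ.erase k, |tridiag n a b c k j|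
      ≤ ∑ j ∈ univ.erase k, ((if (j : ℕ) = k + 1 then |b k| else 0) +
          (if (j : ℕ) + 1 = k then |c k| else 0)) := by
        refine sum_le_sum fun j hj => ?_
        have hjk : (j : ℕ) ≠ k := Fin.val_ne_of_ne (ne_of_mem_erase hj)
        simp only [tridiag, if_neg hjk]
        split_ifs <;> first | omega | simp
    _ ≤ ∑ j : Fin n, ((if (j : ℕ) = k + 1 then |b k| else 0) +
          (if (j : ℕ) + 1 = k then |c k| else 0)) :=
        sum_le_sum_of_subset_of_nonneg (erase_subset _ _) fun _ _ _ => by positivity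
    _ ≤ |b k| + |c k| := by
        rw [sum_add_distrib]
        gcongr
        all_goals exact at_most_one _ _ (abs_nonneg _) fun i j hi hj => Fin.ext (by omega)

theorem tridiag_reversible (hbc : ∀ i, i + 1 < n → 0 < b i * c (i + 1)) (i j : Fin n) :
    (∏ k ∈ range i, b k / c (k + 1)) * tridiag n a b c i j =
      (∏ k ∈ range j, b k / c (k + 1)) * tridiag n a b c j i := by
  have step : ∀ i, i + 1 < n →
      (∏ k ∈ range i, b k / c (k + 1)) * b i =
        (∏ k ∈ range (i + 1), b k / c (k + 1)) * c (i + 1) :=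
    fun i hi => by
      rw [prod_range_succ, mul_assoc, div_mul_cancel₀ _ (right_ne_zero_of_mul (hbc i hi).ne')]
  simp only [tridiag]
  split_ifs <;> first | omega | skip
  · rw [Fin.ext ‹(j : ℕ) = i›]
  · rw [‹(j : ℕ) = i + 1›]; exact step i (‹(j : ℕ) = i + 1› ▸ j.isLt)
  · rw [← ‹(j : ℕ) + 1 = i›]; exact (step j (‹(j : ℕ) + 1 = i› ▸ i.isLt)).symm
  · simp

end Tridiag

theorem tridiag_pow_mul_le_sq (m : ℕ) {a b c : ℕ → ℝ} (hbc : ∀ i < m, 0 < b i * c (i + 1))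
    (hdom : ∀ i ≤ m, |b i| + |c i| ≤ a i) (t : ℕ) :
    (tridiag (m + 1) a b c ^ t) 0 (Fin.last m) * (tridiag (m + 1) a b c ^ (t + 2)) 0 (Fin.last m)
      ≤ ((tridiag (m + 1) a b c ^ (t + 1)) 0 (Fin.last m)) ^ 2 := by
  set M := tridiag (m + 1) a b c
  have hw : ∀ i : Fin (m + 1), 0 < ∏ k ∈ range i, b k / c (k + 1) := fun i =>
    prod_pos fun k hk => div_pos_iff.2 (mul_pos_iff.1 (hbc k (by have := mem_range.1 hk; omega)))
  obtain ⟨D, hS⟩ := M.isHermitian_conj_of_reversible _ hw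
    (tridiag_reversible fun i hi => hbc i (by omega))
  obtain ⟨C, hC⟩ := M.exists_pow_apply_eq_sum_pow D hS 0 (Fin.last m)
  have hμ : ∀ x ∈ List.ofFn hS.eigenvalues, 0 ≤ x := by
    simp only [List.mem_ofFn, forall_exists_index, forall_apply_eq_imp_iff]
    refine fun k => nonneg_of_mem_spectrum_of_diagDominant (fun i => ?_)
      (M.eigenvalues_mem_spectrum_of_conj D hS k)
    simp only [M, tridiag_apply_self]
    exact (sum_erase_abs_tridiag_le i).trans (hdom i i.is_le)
  have hg : HasCharRoots (List.ofFn hS.eigenvalues) fun t => (M ^ t) 0 (Fin.last m) := by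
    simpa only [hC] using hasCharRoots_sum_pow hS.eigenvalues C
  rw [List.ofFn_succ] at hg hμ
  have hz : ∀ t < m, (M ^ t) 0 (Fin.last m) = 0 := fun t ht =>
    M.pow_apply_eq_zero_of_add_lt (fun i j h => tridiag_apply_eq_zero i j h) t 0 _ (by simp [ht])
  have := hg.eq_mul_completeHomogeneous _ _ _ (by simpa using hz)
  simp only [List.length_ofFn] at this
  exact (isPF₂_completeHomogeneous _ hμ).mul_le_sq_of_shift hz this t

open Filter Topology in
theorem tridiag_pow_mul_le_sq_of_nonneg (m : ℕ) {a b c : ℕ → ℝ} (hb : ∀ i ≤ m, 0 < b i)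
    (hc : ∀ i ≤ m, 0 ≤ c i) (hdom : ∀ i ≤ m, b i + c i ≤ a i) (t : ℕ) :
    (tridiag (m + 1) a b c ^ t) 0 (Fin.last m) * (tridiag (m + 1) a b c ^ (t + 2)) 0 (Fin.last m)
      ≤ ((tridiag (m + 1) a b c ^ (t + 1)) 0 (Fin.last m)) ^ 2 := by
  -- moving mass `ε` from `b` to `c` makes the subdiagonal positive and keeps `|b i| + |c i|`
  let F : ℝ → ℕ → ℝ := fun ε s =>
    (tridiag (m + 1) a (fun i => b i - ε) (fun i => c i + ε) ^ s) 0 (Fin.last m)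
  have hF : ∀ s, Tendsto (fun ε => F ε s) (𝓝[>] 0) (𝓝 (F 0 s)) := by
    intro s
    have : Continuous fun ε : ℝ =>
        tridiag (m + 1) a (fun i => b i - ε) (fun i => c i + ε) := by
      refine continuous_pi fun i => continuous_pi fun j => ?_
      simp only [tridiag]
      split_ifs <;> fun_prop
    exact ((this.pow s).matrix_elem 0 (Fin.last m)).continuousWithinAt.tendsto
  have hsmall : ∀ᶠ ε in 𝓝[>] (0 : ℝ), ∀ i ∈ range (m + 1), ε < b i :=
    (eventually_all_finset _).2 fun i hi =>
      eventually_nhdsWithin_of_eventually_nhds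
        (eventually_lt_nhds (hb i (by have := mem_range.1 hi; omega)))
  have hperturbed : ∀ᶠ ε in 𝓝[>] (0 : ℝ), F ε t * F ε (t + 2) ≤ F ε (t + 1) ^ 2 := by
    filter_upwards [hsmall, self_mem_nhdsWithin] with ε hε (hε0 : 0 < ε)
    have hε : ∀ i ≤ m, ε < b i := fun i hi => hε i (mem_range.2 (by omega))
    refine tridiag_pow_mul_le_sq m (fun i hi => ?_) (fun i hi => ?_) t
    · exact mul_pos (by linarith [hε i hi.le]) (by linarith [hc (i + 1) hi])
    · rw [abs_of_pos (by linarith [hε i hi]), abs_of_pos (by linarith [hc i hi])]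
      linarith [hdom i hi]
  simpa [F] using le_of_tendsto_of_tendsto ((hF t).mul (hF (t + 2))) ((hF (t + 1)).pow 2) hperturbed

theorem Matrix.pow_apply_last_eq_zero {R : Type*} [Semiring R] {n : ℕ}
    {Q : Matrix (Fin (n + 1)) (Fin (n + 1)) R} (hQ : ∀ i, Q i (Fin.last n) = 0) (t : ℕ)
    {i : Fin (n + 1)} (hi : i ≠ Fin.last n) : (Q ^ t) i (Fin.last n) = 0 := by
  cases t with
  | zero => exact one_apply_ne hi
  | succ t => simp [pow_succ, mul_apply, hQ]

theorem Matrix.submatrix_castSucc_pow {R : Type*} [Semiring R] {n : ℕ}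
    {Q : Matrix (Fin (n + 1)) (Fin (n + 1)) R} (hQ : ∀ i, Q i (Fin.last n) = 0) (t : ℕ) :
    (Q ^ t).submatrix Fin.castSucc Fin.castSucc = Q.submatrix Fin.castSucc Fin.castSucc ^ t := by
  induction t with
  | zero => ext i j; simp [one_apply]
  | succ t ih =>
    ext i j
    rw [pow_succ', pow_succ', ← ih]
    simp [mul_apply, Fin.sum_univ_castSucc, hQ]

theorem pathQ_submatrix_castSucc (d : ℕ) (α β : ℕ → ℝ) :
    (pathQ d α β).submatrix Fin.castSucc Fin.castSucc =
      tridiag d α β fun i => 1 - α i - β i := by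
  ext i j
  simp [pathQ, pathP, tridiag]

theorem firstPassage_succ (e : ℕ) (α β : ℕ → ℝ) (t : ℕ) :
    firstPassage (e + 1) α β (t + 1) =
      β e * (tridiag (e + 1) α β (fun i => 1 - α i - β i) ^ t) 0 (Fin.last e) := by
  have hQ : ∀ i, pathQ (e + 1) α β i (Fin.last (e + 1)) = 0 := fun i => if_pos rfl
  rw [firstPassage, Fin.sum_univ_castSucc,
    pow_apply_last_eq_zero hQ t (Fin.ext_iff.not.2 (by simp)), zero_mul, add_zero,
    sum_eq_single (Fin.last e)]
  · rw [← pathQ_submatrix_castSucc, ← submatrix_castSucc_pow hQ, ← Fin.castSucc_zero]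
    simp [pathP, mul_comm]
  · intro j _ hj
    have : (j : ℕ) ≠ e := Fin.val_ne_of_ne (hj : j ≠ Fin.last e)
    simp only [pathP, Fin.val_last, Fin.val_castSucc]
    split_ifs <;> first | omega | simp
  · simp

theorem firstPassage_log_concave_general (d : ℕ) (hd : 1 ≤ d) (α β : ℕ → ℝ)
    (hα : ∀ i ≤ d, (1 : ℝ) / 2 ≤ α i)
    (hβ : ∀ i < d, 0 < β i)
    (hsum : ∀ i ≤ d, α i + β i ≤ 1) :
    ∀ t : ℕ, 1 ≤ t →
      firstPassage d α β t ^ 2 ≥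
        firstPassage d α β (t - 1) * firstPassage d α β (t + 1) := by
  obtain ⟨e, rfl⟩ := Nat.exists_eq_add_of_le' hd
  rintro (_ | _ | s) ht
  · omega
  · simp only [Nat.sub_self, firstPassage, zero_mul]; positivity
  · have key := tridiag_pow_mul_le_sq_of_nonneg (a := α) (c := fun i => 1 - α i - β i) e
      (fun i hi => hβ i (by omega)) (fun i hi => by linarith [hsum i (by omega)])
      (fun i hi => by linarith [hα i (by omega)]) s
    rw [ge_iff_le, Nat.add_sub_cancel, firstPassage_succ, firstPassage_succ, firstPassage_succ]
    calc β e * _ * (β e * _) = β e ^ 2 * (_ * _) := by ring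
      _ ≤ β e ^ 2 * _ := mul_le_mul_of_nonneg_left key (sq_nonneg _)
      _ = _ := by ring

/-- If all loop probabilities satisfy `α i ≥ 1/2` and the upward probabilities are
positive, then the first-passage probability `f_{0,d}(t)` is log-concave in `t`. -/
theorem firstPassage_log_concave (d : ℕ) (hd : 1 ≤ d) (α β : ℕ → ℝ)
    (hα : ∀ i ≤ d, (1 : ℝ) / 2 ≤ α i)
    (hβ : ∀ i < d, 0 < β i)
    (hβd : β d = 0)
    (hsum : ∀ i ≤ d, α i + β i ≤ 1)
    (h0 : α 0 + β 0 = 1) :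
    ∀ t : ℕ, 1 ≤ t →
      firstPassage d α β t ^ 2 ≥
        firstPassage d α β (t - 1) * firstPassage d α β (t + 1) :=
  firstPassage_log_concave_general d hd α β hα hβ hsum
end

section
/- For the lazy random walk on the d-dimensional hypercube {0,1}^d (loop probability 1/2, move to each of the d neighbors with probability 1/(2d)), the transition probability P_{i,j}(t) between any two fixed vertices i and j is a unimodal function of t. -/
/-- Transition matrix of the lazy random walk on the `d`-dimensional hypercube:
loop probability `1/2`, and probability `1/(2d)` for each of the `d` neighbors. -/
noncomputable def cubeP (d : ℕ) : Matrix (Fin d → Bool) (Fin d → Bool) ℝ :=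
  fun x y =>
    if x = y then 1 / 2
    else if hammingDist x y = 1 then 1 / (2 * d)
    else 0

/-- A function `f : ℕ → ℝ` is unimodal if there is an `s` such that `f` is monotone
on `{t | t ≤ s}` and monotone on `{t | s ≤ t}`. -/
def Unimodal (f : ℕ → ℝ) : Prop :=
  ∃ s : ℕ, (MonotoneOn f {x | x ≤ s} ∨ AntitoneOn f {x | x ≤ s}) ∧
    (MonotoneOn f {x | s ≤ x} ∨ AntitoneOn f {x | s ≤ x})

/-!
A step of the lazy walk picks a coordinate uniformly and resamples it. If `i` and `j` differ in
`k` coordinates, this gives `d ^ t * P^t(i, j) = ∑ₙ S(t, n) * n! * C(d - k, n - k) / 2 ^ n` with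
`S` the Stirling numbers of the second kind: `n! * S(t, n)` sequences of `t` coordinates use exactly
a given set of `n` coordinates, that set must contain the `k` coordinates where `i` and `j` differ,
and its `n` resampled values must agree with `j`.

Hence `P^(t+1)(i, j) - P^t(i, j) = d^-(t+1) * ∑ₙ S(t, n) * cₙ` where `cₙ ≥ 0` for `n < 2k` and
`cₙ ≤ 0` for `n ≥ 2k`. Log-concavity of `n ↦ S(t, n)` makes `n ↦ S(t + 1, n) / S(t, n)`
nondecreasing, so once such a sum is negative it stays nonpositive for all later `t`: the
transition probability first increases, then decreases.
-/

open Finset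
open scoped Nat

theorem unimodal_of_descent_persists (f : ℕ → ℝ)
    (h : ∀ s t, s ≤ t → f (s + 1) < f s → f (t + 1) ≤ f t) : Unimodal f := by
  by_cases hdesc : ∃ s, f (s + 1) < f s
  · classical
    refine ⟨Nat.find hdesc, Or.inl ?_, Or.inr ?_⟩
    · intro a _ b hb hab
      induction b, hab using Nat.le_induction with
      | base => exact le_rfl
      | succ b _ ih =>
        exact (ih (Nat.le_of_succ_le hb)).trans (not_lt.mp (Nat.find_min hdesc hb))
    · exact antitoneOn_nat_Ici_of_succ_le fun t ht => h _ t ht (Nat.find_spec hdesc)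
  · push Not at hdesc
    have hmono := monotone_nat_of_le_succ hdesc
    exact ⟨0, Or.inl (hmono.monotoneOn _), Or.inl (hmono.monotoneOn _)⟩

theorem mul_succ_le_succ_mul_of_logConcave {a : ℕ → ℕ}
    (hlc : ∀ n, a n * a (n + 2) ≤ a (n + 1) * a (n + 1))
    (hgap : ∀ n, a (n + 1) = 0 → a (n + 2) = 0) {n m : ℕ} (hnm : n ≤ m) :
    a n * a (m + 1) ≤ a (n + 1) * a m := by
  induction m, hnm using Nat.le_induction with
  | base => rw [mul_comm]
  | succ m _ ih =>
    rcases (a (m + 1)).eq_zero_or_pos with h0 | hpos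
    · simp [hgap m h0]
    · refine Nat.le_of_mul_le_mul_right ?_ hpos
      calc a n * a (m + 2) * a (m + 1) = a n * a (m + 1) * a (m + 2) := by ring
        _ ≤ a (n + 1) * a m * a (m + 2) := Nat.mul_le_mul_right _ ih
        _ = a (n + 1) * (a m * a (m + 2)) := by ring
        _ ≤ a (n + 1) * (a (m + 1) * a (m + 1)) := Nat.mul_le_mul_left _ (hlc m)
        _ = a (n + 1) * a (m + 1) * a (m + 1) := by ring

namespace Nat

theorem stirlingSecond_pos {n k : ℕ} (hk : k ≠ 0) (hkn : k ≤ n) : 0 < stirlingSecond n k := by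
  induction n generalizing k with
  | zero => omega
  | succ n ih =>
    obtain ⟨k, rfl⟩ := exists_eq_succ_of_ne_zero hk
    rw [stirlingSecond_succ_succ]
    rcases (succ_le_succ_iff.mp hkn).eq_or_lt with rfl | hlt
    · rw [stirlingSecond_self]; omega
    · have := ih k.succ_ne_zero hlt; positivity

theorem stirlingSecond_add_two_eq_zero {n k : ℕ} (h : stirlingSecond n (k + 1) = 0) :
    stirlingSecond n (k + 2) = 0 :=
  stirlingSecond_eq_zero_of_lt <| by
    by_contra! hle
    exact (stirlingSecond_pos k.succ_ne_zero (by omega)).ne' h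

theorem stirlingSecond_logConcave (n k : ℕ) :
    stirlingSecond n k * stirlingSecond n (k + 2) ≤
      stirlingSecond n (k + 1) * stirlingSecond n (k + 1) := by
  induction n generalizing k with
  | zero => simp
  | succ n ih =>
    cases k with
    | zero => simp
    | succ k =>
      have h1 : stirlingSecond n (k + 1) * stirlingSecond n (k + 3) ≤
          stirlingSecond n (k + 2) * stirlingSecond n (k + 2) := ih (k + 1)
      have h2 := ih k
      have h3 : stirlingSecond n k * stirlingSecond n (k + 3) ≤
          stirlingSecond n (k + 1) * stirlingSecond n (k + 2) :=
        mul_succ_le_succ_mul_of_logConcave ih (fun _ => stirlingSecond_add_two_eq_zero)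
          (le_add_right k 2)
      rw [stirlingSecond_succ_succ n k, stirlingSecond_succ_succ n (k + 1),
        stirlingSecond_succ_succ n (k + 2)]
      -- after expanding, bound the products by `h1`, `h2`, `h3` and use
      -- `(k + 1) * (k + 3) ≤ (k + 2) ^ 2`
      nlinarith [Nat.mul_le_mul_left ((k + 1) * (k + 3)) h1, Nat.mul_le_mul_left (k + 3) h3]

theorem stirlingSecond_mul_succ_le_succ_mul {n k l : ℕ} (hkl : k ≤ l) :
    stirlingSecond n k * stirlingSecond n (l + 1) ≤
      stirlingSecond n (k + 1) * stirlingSecond n l :=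
  mul_succ_le_succ_mul_of_logConcave (stirlingSecond_logConcave n)
    (fun _ => stirlingSecond_add_two_eq_zero) hkl

theorem stirlingSecond_mul_stirlingSecond_succ_le {n k l : ℕ} (hkl : k ≤ l) :
    stirlingSecond n l * stirlingSecond (n + 1) k ≤
      stirlingSecond n k * stirlingSecond (n + 1) l := by
  obtain _ | k := k
  · simp
  obtain ⟨l, rfl⟩ : ∃ l', l = l' + 1 := ⟨l - 1, by omega⟩
  have := stirlingSecond_mul_succ_le_succ_mul (n := n) (succ_le_succ_iff.mp hkl)
  rw [stirlingSecond_succ_succ, stirlingSecond_succ_succ]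
  nlinarith [Nat.mul_le_mul_right (stirlingSecond n (k + 1) * stirlingSecond n (l + 1)) hkl]

end Nat

theorem sum_mul_nonpos_of_ratio_monotone {R : Type*} [CommRing R] [LinearOrder R]
    [IsStrictOrderedRing R] {s : Finset ℕ} {a b c : ℕ → R} {m : ℕ} (ha : 0 < a m)
    (hb : 0 ≤ b m) (hab : ∀ k l, k ≤ l → a l * b k ≤ a k * b l)
    (hc_pos : ∀ n < m, 0 ≤ c n) (hc_neg : ∀ n, m ≤ n → c n ≤ 0)
    (h : ∑ n ∈ s, a n * c n ≤ 0) : ∑ n ∈ s, b n * c n ≤ 0 := by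
  have key : a m * ∑ n ∈ s, b n * c n ≤ b m * ∑ n ∈ s, a n * c n := by
    rw [mul_sum, mul_sum]
    refine sum_le_sum fun n _ => ?_
    rcases lt_or_ge n m with hnm | hmn
    · calc a m * (b n * c n) = a m * b n * c n := by ring
        _ ≤ a n * b m * c n := mul_le_mul_of_nonneg_right (hab n m hnm.le) (hc_pos n hnm)
        _ = b m * (a n * c n) := by ring
    · calc a m * (b n * c n) = a m * b n * c n := by ring
        _ ≤ a n * b m * c n := mul_le_mul_of_nonpos_right (hab m n hmn) (hc_neg n hmn)
        _ = b m * (a n * c n) := by ring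
  exact nonpos_of_mul_nonpos_right (key.trans (mul_nonpos_of_nonneg_of_nonpos hb h)) ha

theorem sum_range_stirlingSecond_succ_mul {R : Type*} [CommSemiring R] (t N : ℕ) (A : ℕ → R)
    (hA : A (N + 1) = 0) :
    ∑ n ∈ range (N + 1), (Nat.stirlingSecond (t + 1) n : R) * A n =
      ∑ n ∈ range (N + 1), (Nat.stirlingSecond t n : R) * (n * A n + A (n + 1)) := by
  simp only [mul_add, sum_add_distrib]
  rw [sum_range_succ', sum_range_succ' (fun n => (Nat.stirlingSecond t n : R) * (n * A n)),
    sum_range_succ (fun n => (Nat.stirlingSecond t n : R) * A (n + 1)), hA]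
  simp [Nat.stirlingSecond_succ_succ, sum_add_distrib, add_mul, mul_add, mul_assoc, mul_left_comm]

theorem sum_stirlingSecond_mul_nonpos_of_le {R : Type*} [CommRing R] [LinearOrder R]
    [IsStrictOrderedRing R] {s : Finset ℕ} {c : ℕ → R} {m : ℕ}
    (hc_pos : ∀ n < m, 0 ≤ c n) (hc_neg : ∀ n, m ≤ n → c n ≤ 0) {t₀ t : ℕ} (ht : t₀ ≤ t)
    (h₀ : ∑ n ∈ s, (Nat.stirlingSecond t₀ n : R) * c n < 0) :
    ∑ n ∈ s, (Nat.stirlingSecond t n : R) * c n ≤ 0 := by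
  rcases Nat.eq_zero_or_pos m with rfl | hm
  · exact sum_nonpos fun n _ => mul_nonpos_of_nonneg_of_nonpos (by positivity) (hc_neg n n.zero_le)
  have hmt₀ : m ≤ t₀ := by
    by_contra! hlt
    refine h₀.not_ge (sum_nonneg fun n _ => ?_)
    rcases lt_or_ge n m with hnm | hmn
    · exact mul_nonneg (by positivity) (hc_pos n hnm)
    · simp [Nat.stirlingSecond_eq_zero_of_lt (hlt.trans_le hmn)]
  induction t, ht using Nat.le_induction with
  | base => exact h₀.le
  | succ t ht ih =>
    refine sum_mul_nonpos_of_ratio_monotone (m := m) ?_ (by positivity)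
      (fun k l hkl => by exact_mod_cast Nat.stirlingSecond_mul_stirlingSecond_succ_le hkl)
      hc_pos hc_neg ih
    exact_mod_cast Nat.stirlingSecond_pos hm.ne' (hmt₀.trans ht)

section Hamming

variable {ι : Type*} [DecidableEq ι]

def flipCoord (x : ι → Bool) (ℓ : ι) : ι → Bool := Function.update x ℓ (!x ℓ)

theorem flipCoord_injective (x : ι → Bool) : Function.Injective (flipCoord x) := by
  intro ℓ ℓ' h
  by_contra hne
  simpa [flipCoord, Function.update_of_ne hne] using congrFun h ℓ

variable [Fintype ι]

theorem hammingDist_update_add {β : ι → Type*} [∀ i, DecidableEq (β i)] (x y : ∀ i, β i)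
    (ℓ : ι) (b : β ℓ) :
    hammingDist (Function.update x ℓ b) y + (if x ℓ ≠ y ℓ then 1 else 0) =
      hammingDist x y + (if b ≠ y ℓ then 1 else 0) := by
  simp only [hammingDist, card_filter]
  rw [Fintype.sum_eq_add_sum_compl ℓ,
    Fintype.sum_eq_add_sum_compl ℓ (fun i => if x i ≠ y i then 1 else 0)]
  have hrest : ∑ i ∈ {ℓ}ᶜ, (if Function.update x ℓ b i ≠ y i then 1 else 0) =
      ∑ i ∈ {ℓ}ᶜ, if x i ≠ y i then 1 else 0 :=
    sum_congr rfl fun i hi => by rw [Function.update_of_ne (by simpa using hi)]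
  simp only [Function.update_self, hrest]
  ring

theorem hammingDist_flipCoord (x y : ι → Bool) (ℓ : ι) :
    hammingDist (flipCoord x ℓ) y =
      if x ℓ ≠ y ℓ then hammingDist x y - 1 else hammingDist x y + 1 := by
  have := hammingDist_update_add x y ℓ (!x ℓ)
  cases hx : x ℓ <;> cases hy : y ℓ <;> simp_all [flipCoord] <;> omega

theorem filter_hammingDist_eq_one (x : ι → Bool) :
    ({y | hammingDist x y = 1} : Finset (ι → Bool)) =
      univ.map ⟨flipCoord x, flipCoord_injective x⟩ := by
  ext y
  simp only [mem_filter, mem_univ, true_and, mem_map, Function.Embedding.coeFn_mk]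
  constructor
  · intro h
    obtain ⟨ℓ, hℓ⟩ := card_eq_one.mp h
    refine ⟨ℓ, funext fun c => ?_⟩
    have hc := congrArg (c ∈ ·) hℓ
    simp only [mem_filter, mem_univ, true_and, mem_singleton, eq_iff_iff] at hc
    by_cases hcℓ : c = ℓ
    · subst hcℓ
      simpa [flipCoord, Bool.eq_not_iff, eq_comm] using hc
    · simpa [flipCoord, Function.update_of_ne hcℓ, hcℓ] using hc
  · rintro ⟨ℓ, rfl⟩
    simp [hammingDist_comm x, hammingDist_flipCoord]

theorem sum_hammingDist_flipCoord {R : Type*} [CommSemiring R] (x y : ι → Bool) (F : ℕ → R) :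
    ∑ ℓ, F (hammingDist (flipCoord x ℓ) y) =
      hammingDist x y * F (hammingDist x y - 1) +
        (Fintype.card ι - hammingDist x y : ℕ) * F (hammingDist x y + 1) := by
  simp only [hammingDist_flipCoord, apply_ite F, sum_ite, sum_const, nsmul_eq_mul]
  have hcompl : #{ℓ | ¬x ℓ ≠ y ℓ} = Fintype.card ι - hammingDist x y := by
    have := card_filter_add_card_filter_not (s := univ) (fun ℓ => x ℓ ≠ y ℓ)
    rw [card_univ] at this
    rw [hammingDist]
    omega
  rw [hcompl]
  rfl

end Hamming

theorem sum_cubeP_mul (d : ℕ) (x : Fin d → Bool) (g : (Fin d → Bool) → ℝ) :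
    ∑ y, cubeP d x y * g y = g x / 2 + (∑ ℓ, g (flipCoord x ℓ)) / (2 * d) := by
  have hrow : ∀ y, cubeP d x y =
      (if x = y then 1 / 2 else 0) + (if hammingDist x y = 1 then (1 / (2 * d) : ℝ) else 0) := by
    intro y
    unfold cubeP
    split_ifs <;> simp_all
  simp only [hrow, add_mul, sum_add_distrib, ite_mul, zero_mul, sum_ite_eq, mem_univ, if_true,
    ← sum_filter, filter_hammingDist_eq_one, sum_map, Function.Embedding.coeFn_mk, ← mul_sum]
  ring

theorem cast_succ_mul_choose_succ {R : Type*} [CommRing R] (r j : ℕ) :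
    ((j : R) + 1) * r.choose (j + 1) = ((r : R) - j) * r.choose j := by
  rcases le_or_gt j r with hjr | hrj
  · have h := Nat.choose_succ_right_eq r j
    rw [← Nat.cast_sub hjr]
    norm_cast
    rw [mul_comm, h, mul_comm]
  · simp [Nat.choose_eq_zero_of_lt hrj, Nat.choose_eq_zero_of_lt (hrj.trans (Nat.lt_succ_self j))]

-- The `if` matters: for `n < k` the truncated `n - k` is `0`, not negative.
noncomputable def cubeCoeff (d k n : ℕ) : ℝ :=
  if k ≤ n then n ! * (d - k).choose (n - k) / 2 ^ n else 0

theorem cubeCoeff_of_lt {d k n : ℕ} (h : n < k) : cubeCoeff d k n = 0 :=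
  if_neg h.not_ge

theorem cubeCoeff_add (d k j : ℕ) :
    cubeCoeff d k (k + j) = (k + j)! * (d - k).choose j / 2 ^ (k + j) := by
  simp [cubeCoeff]

theorem cubeCoeff_nonneg (d k n : ℕ) : 0 ≤ cubeCoeff d k n := by
  unfold cubeCoeff
  split_ifs <;> positivity

theorem cubeCoeff_of_lt_right {d k n : ℕ} (hk : k ≤ d) (h : d < n) : cubeCoeff d k n = 0 := by
  obtain ⟨j, rfl⟩ := exists_add_of_le (hk.trans h.le)
  rw [cubeCoeff_add, Nat.choose_eq_zero_of_lt (by omega)]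
  simp

theorem cubeCoeff_self (d k : ℕ) : cubeCoeff d k k = k ! / 2 ^ k := by
  simpa using cubeCoeff_add d k 0

theorem natCast_mul_cubeCoeff_pred (k r j : ℕ) :
    k * cubeCoeff (k + r) (k - 1) (k + j) =
      k * ((k + j)! * (r + 1).choose (j + 1) / 2 ^ (k + j)) := by
  rcases k with _ | k
  · simp
  · have := cubeCoeff_add (k + 1 + r) k (j + 1)
    rw [show k + (j + 1) = k + 1 + j by ring, show k + 1 + r - k = r + 1 by omega] at this
    simp [this]

theorem natCast_mul_cubeCoeff_succ (k r j : ℕ) :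
    r * cubeCoeff (k + r) (k + 1) (k + j) = j * ((k + j)! * r.choose j / 2 ^ (k + j)) := by
  rcases j with _ | j
  · simp [cubeCoeff_of_lt]
  · rcases r with _ | r
    · simp
    have := cubeCoeff_add (k + (r + 1)) (k + 1) j
    rw [show k + 1 + j = k + (j + 1) by ring, show k + (r + 1) - (k + 1) = r by omega] at this
    rw [this]
    have h : ((r : ℝ) + 1) * r.choose j = (r + 1).choose (j + 1) * (j + 1) := by
      exact_mod_cast Nat.add_one_mul_choose_eq r j
    push_cast
    linear_combination ((k + (j + 1))! / 2 ^ (k + (j + 1)) : ℝ) * h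

theorem cubeCoeff_rec {d k : ℕ} (hk : k ≤ d) (n : ℕ) :
    2 * (n * cubeCoeff d k n + cubeCoeff d k (n + 1)) =
      d * cubeCoeff d k n + k * cubeCoeff d (k - 1) n + (d - k : ℕ) * cubeCoeff d (k + 1) n := by
  obtain ⟨r, rfl⟩ := exists_add_of_le hk
  rcases lt_or_ge n k with hnk | hkn
  · rcases (Nat.succ_le_of_lt hnk).eq_or_lt with rfl | hlt
    · rw [cubeCoeff_of_lt hnk, cubeCoeff_of_lt (by omega : n < n + 1 + 1), cubeCoeff_self,
        show n + 1 - 1 = n by rfl, cubeCoeff_self, Nat.factorial_succ, pow_succ]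
      push_cast
      ring
    · rw [cubeCoeff_of_lt hnk, cubeCoeff_of_lt hlt, cubeCoeff_of_lt (by omega : n < k - 1),
        cubeCoeff_of_lt (by omega : n < k + 1)]
      ring
  · obtain ⟨j, rfl⟩ := exists_add_of_le hkn
    rw [natCast_mul_cubeCoeff_pred, show k + r - k = r by omega, natCast_mul_cubeCoeff_succ,
      show k + j + 1 = k + (j + 1) by ring, cubeCoeff_add, cubeCoeff_add, add_tsub_cancel_left,
      ← add_assoc, Nat.factorial_succ, pow_succ, Nat.choose_succ_succ' r j]
    have h := cast_succ_mul_choose_succ (R := ℝ) r j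
    push_cast
    linear_combination ((k + j)! / 2 ^ (k + j) : ℝ) * h

noncomputable def cubeIncrCoeff (d k n : ℕ) : ℝ :=
  (n - d : ℝ) * cubeCoeff d k n + cubeCoeff d k (n + 1)

theorem cubeIncrCoeff_add (k r j : ℕ) :
    cubeIncrCoeff (k + r) k (k + j) =
      (k + j)! * r.choose (j + 1) * (k - j - 1 : ℝ) / 2 ^ (k + j + 1) := by
  have h := cast_succ_mul_choose_succ (R := ℝ) r j
  rw [cubeIncrCoeff, show k + j + 1 = k + (j + 1) by ring, cubeCoeff_add, cubeCoeff_add,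
    add_tsub_cancel_left, ← add_assoc, Nat.factorial_succ, pow_succ]
  push_cast
  linear_combination ((k + j)! / 2 ^ (k + j) : ℝ) * h

theorem cubeIncrCoeff_nonneg {d k n : ℕ} (hk : k ≤ d) (hn : n < 2 * k) :
    0 ≤ cubeIncrCoeff d k n := by
  rcases lt_or_ge n k with hnk | hkn
  · rw [cubeIncrCoeff, cubeCoeff_of_lt hnk, mul_zero, zero_add]
    exact cubeCoeff_nonneg d k (n + 1)
  · obtain ⟨r, rfl⟩ := exists_add_of_le hk
    obtain ⟨j, rfl⟩ := exists_add_of_le hkn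
    have hj : (j : ℝ) + 1 ≤ k := by exact_mod_cast (by omega : j + 1 ≤ k)
    rw [cubeIncrCoeff_add]
    have : (0 : ℝ) ≤ k - j - 1 := by linarith
    positivity

theorem cubeIncrCoeff_nonpos {d k n : ℕ} (hk : k ≤ d) (hn : 2 * k ≤ n) :
    cubeIncrCoeff d k n ≤ 0 := by
  obtain ⟨r, rfl⟩ := exists_add_of_le hk
  obtain ⟨j, rfl⟩ := exists_add_of_le (by omega : k ≤ n)
  have hj : (k : ℝ) ≤ j := by exact_mod_cast (by omega : k ≤ j)
  rw [cubeIncrCoeff_add]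
  refine div_nonpos_of_nonpos_of_nonneg (mul_nonpos_of_nonneg_of_nonpos (by positivity) ?_)
    (by positivity)
  linarith

noncomputable def cubeSum (d k t : ℕ) : ℝ :=
  ∑ n ∈ range (d + 1), (Nat.stirlingSecond t n : ℝ) * cubeCoeff d k n

theorem cubeSum_zero (d k : ℕ) : cubeSum d k 0 = if k = 0 then 1 else 0 := by
  rw [cubeSum, sum_range_succ']
  rcases k.eq_zero_or_pos with rfl | hk
  · simp [cubeCoeff]
  · simp [cubeCoeff_of_lt hk, hk.ne']

theorem cubeSum_succ {d k : ℕ} (hk : k ≤ d) (t : ℕ) :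
    cubeSum d k (t + 1) =
      ∑ n ∈ range (d + 1),
        (Nat.stirlingSecond t n : ℝ) * (n * cubeCoeff d k n + cubeCoeff d k (n + 1)) :=
  sum_range_stirlingSecond_succ_mul t d _ (cubeCoeff_of_lt_right hk d.lt_succ_self)

theorem two_mul_cubeSum_succ {d k : ℕ} (hk : k ≤ d) (t : ℕ) :
    2 * cubeSum d k (t + 1) =
      d * cubeSum d k t + k * cubeSum d (k - 1) t + (d - k : ℕ) * cubeSum d (k + 1) t := by
  rw [cubeSum_succ hk]
  simp only [cubeSum, mul_sum, ← sum_add_distrib]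
  exact sum_congr rfl fun n _ => by
    linear_combination (Nat.stirlingSecond t n : ℝ) * cubeCoeff_rec hk n

theorem cubeP_pow_apply {d : ℕ} (hd : d ≠ 0) (t : ℕ) (i j : Fin d → Bool) :
    (cubeP d ^ t) i j = cubeSum d (hammingDist i j) t / d ^ t := by
  induction t generalizing i with
  | zero =>
    simp [cubeSum_zero, Matrix.one_apply, hammingDist_eq_zero]
  | succ t ih =>
    have hk : hammingDist i j ≤ d := by simpa using hammingDist_le_card_fintype (x := i) (y := j)
    rw [pow_succ', Matrix.mul_apply]
    simp only [ih, sum_cubeP_mul, sum_hammingDist_flipCoord i j (fun k => cubeSum d k t / d ^ t),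
      Fintype.card_fin]
    have := two_mul_cubeSum_succ hk t
    field_simp
    linear_combination (-(d : ℝ) * d ^ t) * this

theorem cubeSum_div_pow_succ_sub {d k : ℕ} (hd : d ≠ 0) (hk : k ≤ d) (t : ℕ) :
    cubeSum d k (t + 1) / d ^ (t + 1) - cubeSum d k t / d ^ t =
      (∑ n ∈ range (d + 1), (Nat.stirlingSecond t n : ℝ) * cubeIncrCoeff d k n) /
        d ^ (t + 1) := by
  have hsub : cubeSum d k (t + 1) - d * cubeSum d k t =
      ∑ n ∈ range (d + 1), (Nat.stirlingSecond t n : ℝ) * cubeIncrCoeff d k n := by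
    rw [cubeSum_succ hk]
    simp only [cubeSum, cubeIncrCoeff, mul_sum, ← sum_sub_distrib]
    exact sum_congr rfl fun n _ => by ring
  rw [← hsub, pow_succ]
  field_simp

/-- For the lazy random walk on the `d`-dimensional hypercube, the transition
probability `P_{i,j}(t)` between any two fixed vertices is unimodal in `t`. -/
theorem cube_transition_unimodal (d : ℕ) (hd : 1 ≤ d) (i j : Fin d → Bool) :
    Unimodal (fun t : ℕ => (cubeP d ^ t) i j) := by
  have hd₀ : d ≠ 0 := by omega
  have hk : hammingDist i j ≤ d := by simpa using hammingDist_le_card_fintype (x := i) (y := j)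
  have hpow : ∀ t, (0 : ℝ) < d ^ (t + 1) := fun t => pow_pos (by exact_mod_cast hd) _
  simp only [cubeP_pow_apply hd₀]
  refine unimodal_of_descent_persists _ fun s t hst hs => ?_
  rw [← sub_neg, cubeSum_div_pow_succ_sub hd₀ hk] at hs
  rw [← sub_nonpos, cubeSum_div_pow_succ_sub hd₀ hk]
  exact div_nonpos_of_nonpos_of_nonneg
    (sum_stirlingSecond_mul_nonpos_of_le (fun _ => cubeIncrCoeff_nonneg hk)
      (fun _ => cubeIncrCoeff_nonpos hk) hst (neg_of_div_neg_left hs (hpow s).le)) (hpow t).le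
end

section
/- On any graph G of maximum degree Δ, there is an initial integer load vector with discrepancy Δ·diam(G) on which the always-round-down diffusion algorithm makes no progress: the load vector x^{(0)} defined by x^{(0)}_k = dist(k,i)·Δ for a fixed vertex i satisfies x^{(t)} = x^{(0)} for all t, since the rounded flow ⌊|x^{(0)}_r - x^{(0)}_s|/(2Δ)⌋ is 0 on every edge {r,s}. -/
open Finset

lemma adj_dist_close {V : Type*} (G : SimpleGraph V) (hconn : G.Connected)
    {r s i : V} (h : G.Adj r s) :
    G.dist r i ≤ G.dist s i + 1 := by
  have := hconn.dist_triangle (u := r) (v := s) (w := i)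
  rwa [(SimpleGraph.dist_eq_one_iff_adj).2 h, add_comm] at this

/-- Lower bound for the RSW (always-round-down) algorithm: on a connected graph `G`
with maximum degree `Δ`, for vertices `i, j` realizing the diameter, the initial load
vector `x⁰ k = dist(k,i)·Δ` has discrepancy `Δ·diam(G) = Δ·dist(i,j)`, the rounded
flow `⌊|x⁰ r - x⁰ s|/(2Δ)⌋` is `0` on every edge, and consequently the RSW process
satisfies `x^{(t)} = x^{(0)}` for all `t`. -/
theorem rsw_stuck {V : Type*} [Fintype V] [DecidableEq V]
    (G : SimpleGraph V) [DecidableRel G.Adj] (hconn : G.Connected)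
    (i j : V) (hdiam : ∀ u v, G.dist u v ≤ G.dist i j)
    (hΔ : 0 < G.maxDegree)
    (x : ℕ → V → ℤ)
    (hx0 : ∀ k, x 0 k = (G.dist k i : ℤ) * G.maxDegree)
    (hstep : ∀ t r, x (t + 1) r = x t r +
      ∑ s ∈ G.neighborFinset r,
        (if x t r ≤ x t s then
          ⌊((x t s - x t r : ℤ) : ℚ) / (2 * G.maxDegree)⌋
        else
          -⌊((x t r - x t s : ℤ) : ℚ) / (2 * G.maxDegree)⌋)) :
    (∀ r s, G.Adj r s →
        ⌊|((x 0 r - x 0 s : ℤ) : ℚ)| / (2 * G.maxDegree)⌋ = 0) ∧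
    (∀ t, x t = x 0) ∧
    (Finset.univ.sup' ⟨i, Finset.mem_univ i⟩ (x 0) -
      Finset.univ.inf' ⟨i, Finset.mem_univ i⟩ (x 0) =
        (G.maxDegree : ℤ) * G.dist i j) := by
  have hΔQ : (0 : ℚ) < (G.maxDegree : ℚ) := by exact_mod_cast hΔ
  -- key : |x0 r - x0 s| ≤ Δ for adjacent r s
  have key : ∀ r s : V, G.Adj r s → |x 0 r - x 0 s| ≤ (G.maxDegree : ℤ) := by
    intro r s h
    rw [hx0, hx0, ← sub_mul, abs_mul, abs_of_nonneg (by positivity : (0:ℤ) ≤ (G.maxDegree:ℤ))]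
    have h1 := adj_dist_close G hconn (i:=i) h
    have h2 := adj_dist_close G hconn (i:=i) h.symm
    have : |((G.dist r i : ℤ)) - (G.dist s i : ℤ)| ≤ 1 := by
      rw [abs_le]
      constructor <;> [skip; skip] <;> omega
    calc |((G.dist r i : ℤ)) - (G.dist s i : ℤ)| * G.maxDegree
        ≤ 1 * G.maxDegree := by
          apply mul_le_mul_of_nonneg_right this (by positivity)
      _ = G.maxDegree := one_mul _
  have floor0 : ∀ a : ℤ, 0 ≤ a → a ≤ (G.maxDegree : ℤ) →
      ⌊((a : ℤ) : ℚ) / (2 * G.maxDegree)⌋ = 0 := by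
    intro a ha hb
    rw [Int.floor_eq_zero_iff]
    constructor
    · apply div_nonneg (by exact_mod_cast ha) (by positivity)
    · show ((a : ℤ) : ℚ) / (2 * G.maxDegree) < 1
      rw [div_lt_one (by positivity)]
      have : ((a : ℤ) : ℚ) ≤ (G.maxDegree : ℚ) := by exact_mod_cast hb
      linarith
  have hfix : ∀ t, x t = x 0 := by
    intro t
    induction t with
    | zero => rfl
    | succ n ih =>
      funext r
      rw [hstep, ih]
      have : ∀ s ∈ G.neighborFinset r,
          (if x 0 r ≤ x 0 s then
            ⌊((x 0 s - x 0 r : ℤ) : ℚ) / (2 * G.maxDegree)⌋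
          else
            -⌊((x 0 r - x 0 s : ℤ) : ℚ) / (2 * G.maxDegree)⌋) = 0 := by
        intro s hs
        rw [SimpleGraph.mem_neighborFinset] at hs
        have hk := key r s hs
        rw [abs_le] at hk
        split_ifs with hle
        · exact floor0 _ (by omega) (by omega)
        · rw [floor0 _ (by omega) (by omega)]; rfl
      rw [Finset.sum_congr rfl this, Finset.sum_const_zero, add_zero]
  refine ⟨?_, hfix, ?_⟩
  · intro r s h
    have hk := key r s h
    have : |((x 0 r - x 0 s : ℤ) : ℚ)| = ((|x 0 r - x 0 s| : ℤ) : ℚ) := by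
      push_cast; ring_nf
    rw [this]
    exact floor0 _ (abs_nonneg _) hk
  · have hsup : Finset.univ.sup' ⟨i, Finset.mem_univ i⟩ (x 0)
        = (G.dist i j : ℤ) * G.maxDegree := by
      apply le_antisymm
      · apply Finset.sup'_le
        intro k _
        rw [hx0]
        have : G.dist k i ≤ G.dist i j := hdiam k i
        apply mul_le_mul_of_nonneg_right (by exact_mod_cast this) (by positivity)
      · have := Finset.le_sup' (x 0) (Finset.mem_univ j)
        rw [hx0, SimpleGraph.dist_comm] at this
        exact this
    have hinf : Finset.univ.inf' ⟨i, Finset.mem_univ i⟩ (x 0) = 0 := by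
      apply le_antisymm
      · have := Finset.inf'_le (x 0) (Finset.mem_univ i)
        rw [hx0, SimpleGraph.dist_eq_zero_iff_eq_or_not_reachable.2 (Or.inl rfl)] at this
        simpa using this
      · apply Finset.le_inf'
        intro k _
        rw [hx0]
        positivity
    rw [hsup, hinf, sub_zero, mul_comm]
end
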